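/- arXiv:2403.03073 — 5 statements merged into one kernel-verified Lean document; each statement's English description precedes it below -/
import Mathlib

section
/- Let G be a group with subgroups G₁, G₂, and H, and suppose that either H or G₁ ∩ G₂ is normal in G. If H ∩ G₁ = H ∩ G₂ and this common intersection is a proper subgroup of H, then ⟨H, G₁ ∩ G₂⟩ ∩ G₁ = ⟨H, G₁ ∩ G₂⟩ ∩ G₂ and this common intersection is a proper subgroup of ⟨H, G₁ ∩ G₂⟩. -/
open scoped Pointwise

/-- Proposition (groupcomp): if `H` or `G₁ ⊓ G₂` is normal in `G` and
`H ⊓ G₁ = H ⊓ G₂ ⊊ H`, then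
`⟨H, G₁ ⊓ G₂⟩ ⊓ G₁ = ⟨H, G₁ ⊓ G₂⟩ ⊓ G₂ ⊊ ⟨H, G₁ ⊓ G₂⟩`. -/
theorem stmt_0 {G : Type*} [Group G] (G₁ G₂ H : Subgroup G)
    (hnorm : H.Normal ∨ (G₁ ⊓ G₂).Normal)
    (heq : H ⊓ G₁ = H ⊓ G₂) (hlt : H ⊓ G₁ < H) :
    (H ⊔ G₁ ⊓ G₂) ⊓ G₁ = (H ⊔ G₁ ⊓ G₂) ⊓ G₂ ∧
      (H ⊔ G₁ ⊓ G₂) ⊓ G₁ < H ⊔ G₁ ⊓ G₂ := by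
  have hdec : ∀ k ∈ H ⊔ G₁ ⊓ G₂, ∃ h ∈ H, ∃ n ∈ G₁ ⊓ G₂, k = h * n := by
    intro k hk
    rcases hnorm with hN | hN
    · haveI := hN
      have : k ∈ ((H : Set G) * ((G₁ ⊓ G₂ : Subgroup G) : Set G)) := by
        rw [← Subgroup.normal_mul]; exact hk
      rcases this with ⟨h, hh, n, hn, rfl⟩
      exact ⟨h, hh, n, hn, rfl⟩
    · haveI := hN
      have : k ∈ ((H : Set G) * ((G₁ ⊓ G₂ : Subgroup G) : Set G)) := by
        rw [← Subgroup.mul_normal]; exact hk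
      rcases this with ⟨h, hh, n, hn, rfl⟩
      exact ⟨h, hh, n, hn, rfl⟩
  have key : ∀ k ∈ H ⊔ G₁ ⊓ G₂, (k ∈ G₁ ↔ k ∈ G₂) := by
    intro k hk
    rcases hdec k hk with ⟨h, hh, n, hn, rfl⟩
    obtain ⟨hn1, hn2⟩ := hn
    constructor
    · intro h1
      have hhG1 : h ∈ G₁ := by
        have : h = (h * n) * n⁻¹ := by group
        rw [this]; exact mul_mem h1 (inv_mem hn1)
      have : h ∈ H ⊓ G₂ := heq ▸ ⟨hh, hhG1⟩
      exact mul_mem this.2 hn2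
    · intro h2
      have hhG2 : h ∈ G₂ := by
        have : h = (h * n) * n⁻¹ := by group
        rw [this]; exact mul_mem h2 (inv_mem hn2)
      have : h ∈ H ⊓ G₁ := heq.symm ▸ ⟨hh, hhG2⟩
      exact mul_mem this.2 hn1
  have heq2 : (H ⊔ G₁ ⊓ G₂) ⊓ G₁ = (H ⊔ G₁ ⊓ G₂) ⊓ G₂ := by
    ext k
    simp only [Subgroup.mem_inf]
    exact ⟨fun ⟨hk, h1⟩ => ⟨hk, (key k hk).mp h1⟩,
           fun ⟨hk, h2⟩ => ⟨hk, (key k hk).mpr h2⟩⟩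
  refine ⟨heq2, lt_of_le_of_ne inf_le_left ?_⟩
  intro hcontra
  have hKle : H ⊔ G₁ ⊓ G₂ ≤ G₁ := by
    rw [← hcontra]; exact inf_le_right
  have : H ⊓ G₁ = H := by
    rw [inf_eq_left.mpr (le_trans le_sup_left hKle)]
  exact hlt.ne this
end

section
/- Let F₁/K and F₂/K be finite Galois extensions (in a common algebraic closure) and let ℓ be a prime dividing gcd([F₁ : F₁∩F₂], [F₂ : F₁∩F₂]). Then there exists an intermediate field K ⊆ L ⊆ F₁F₂ such that LF₁ = LF₂ and [LF₁ : L] = ℓ. -/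
open IntermediateField Module
set_option synthInstance.maxHeartbeats 1000000
set_option maxHeartbeats 4000000

section Aux
variable {K A : Type*} [Field K] [Field A] [Algebra K A]

lemma gc_aux : GaloisConnection
    (OrderDual.toDual ∘ (fixingSubgroup : IntermediateField K A → Subgroup (A ≃ₐ[K] A)))
    ((fixedField : Subgroup (A ≃ₐ[K] A) → IntermediateField K A) ∘ OrderDual.ofDual) :=
  fun X H => (IntermediateField.le_iff_le (OrderDual.ofDual H) X).symm

lemma fixingSubgroup_sup' (X Y : IntermediateField K A) :
    (X ⊔ Y).fixingSubgroup = X.fixingSubgroup ⊓ Y.fixingSubgroup :=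
  gc_aux.l_sup

lemma fixedField_sup' (H₁ H₂ : Subgroup (A ≃ₐ[K] A)) :
    fixedField (H₁ ⊔ H₂) = fixedField H₁ ⊓ fixedField H₂ :=
  gc_aux.u_inf

lemma finrank_extendScalars_eq {F E : IntermediateField K A} (h : F ≤ E) :
    finrank K (extendScalars h) = finrank K E := rfl

lemma tower_aux {F E : IntermediateField K A} (h : F ≤ E) :
    finrank K F * finrank F (extendScalars h) = finrank K E := by
  rw [← finrank_extendScalars_eq h]
  exact Module.finrank_mul_finrank K F (extendScalars h)

lemma finrank_lift_eq (N : IntermediateField K A) (L' : IntermediateField K ↥N) :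
    finrank K (IntermediateField.lift L') = finrank K ↥L' :=
  (LinearEquiv.finrank_eq (liftAlgEquiv L').toLinearEquiv).symm

lemma card_sup_of_disjoint {G : Type*} [Group G] [Finite G] (H₁ H₂ : Subgroup G)
    [H₁.Normal] (hdisj : H₁ ⊓ H₂ = ⊥) :
    Nat.card ↥(H₁ ⊔ H₂) = Nat.card ↥H₁ * Nat.card ↥H₂ := by
  have hb : H₁.subgroupOf H₂ = ⊥ :=
    Subgroup.subgroupOf_eq_bot.mpr (disjoint_iff.mpr hdisj)
  have e1 : Nat.card ↥H₂ = Nat.card (↥H₂ ⧸ H₁.subgroupOf H₂) := by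
    rw [hb]
    exact (Nat.card_congr (QuotientGroup.quotientBot (G := ↥H₂)).toEquiv).symm
  have e2 : Nat.card (↥H₂ ⧸ H₁.subgroupOf H₂)
      = Nat.card (↥(H₂ ⊔ H₁) ⧸ H₁.subgroupOf (H₂ ⊔ H₁)) :=
    Nat.card_congr (QuotientGroup.quotientInfEquivProdNormalQuotient H₂ H₁).toEquiv
  have e3 : Nat.card (↥(H₂ ⊔ H₁) ⧸ H₁.subgroupOf (H₂ ⊔ H₁))
      = (H₁.subgroupOf (H₂ ⊔ H₁)).index := rfl
  have e4 : Nat.card ↥(H₁.subgroupOf (H₂ ⊔ H₁)) = Nat.card ↥H₁ :=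
    Nat.card_congr (Subgroup.subgroupOfEquivOfLe (le_sup_right : H₁ ≤ H₂ ⊔ H₁)).toEquiv
  have e5 := Subgroup.card_mul_index (H₁.subgroupOf (H₂ ⊔ H₁))
  rw [sup_comm, ← e5, e4]
  rw [e1, e2, e3]

end Aux

/-- Proposition (entdeg): if `F₁/K` and `F₂/K` are finite Galois and `ℓ` is a prime
dividing `gcd([F₁ : F₁ ∩ F₂], [F₂ : F₁ ∩ F₂])`, then there is a field
`K ⊆ L ⊆ F₁F₂` with `LF₁ = LF₂` and `[LF₁ : L] = ℓ`. -/
theorem stmt_5 {K : Type*} [Field K]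
    (F₁ F₂ : IntermediateField K (AlgebraicClosure K))
    [FiniteDimensional K ↥F₁] [FiniteDimensional K ↥F₂]
    [IsGalois K ↥F₁] [IsGalois K ↥F₂]
    (ℓ : ℕ) (hℓ : ℓ.Prime)
    (hdvd : ℓ ∣ Nat.gcd
      (Module.finrank ↥(F₁ ⊓ F₂)
        ↥(IntermediateField.extendScalars (inf_le_left : F₁ ⊓ F₂ ≤ F₁)))
      (Module.finrank ↥(F₁ ⊓ F₂)
        ↥(IntermediateField.extendScalars (inf_le_right : F₁ ⊓ F₂ ≤ F₂)))) :
    ∃ L : IntermediateField K (AlgebraicClosure K),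
      L ≤ F₁ ⊔ F₂ ∧ L ⊔ F₁ = L ⊔ F₂ ∧
      Module.finrank ↥L
        ↥(IntermediateField.extendScalars (le_sup_left : L ≤ L ⊔ F₁)) = ℓ := by
  classical
  haveI : Fact ℓ.Prime := ⟨hℓ⟩
  set A := AlgebraicClosure K with hA
  set N : IntermediateField K A := F₁ ⊔ F₂ with hN
  haveI : FiniteDimensional K ↥N := IntermediateField.finiteDimensional_sup F₁ F₂
  set F₁' : IntermediateField K ↥N := restrict (le_sup_left : F₁ ≤ N) with hF₁'
  set F₂' : IntermediateField K ↥N := restrict (le_sup_right : F₂ ≤ N) with hF₂'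
  haveI : IsGalois K ↥F₁' := IsGalois.of_algEquiv (restrict_algEquiv _)
  haveI : IsGalois K ↥F₂' := IsGalois.of_algEquiv (restrict_algEquiv _)
  set H₁ : Subgroup (↥N ≃ₐ[K] ↥N) := F₁'.fixingSubgroup with hH₁
  set H₂ : Subgroup (↥N ≃ₐ[K] ↥N) := F₂'.fixingSubgroup with hH₂
  haveI hn₁ : H₁.Normal := IsGalois.fixingSubgroup_normal_of_isGalois F₁'
  haveI hn₂ : H₂.Normal := IsGalois.fixingSubgroup_normal_of_isGalois F₂'
  have hfix₁ : fixedField H₁ = F₁' := IsGalois.fixedField_fixingSubgroup F₁'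
  have hfix₂ : fixedField H₂ = F₂' := IsGalois.fixedField_fixingSubgroup F₂'
  have hlift₁ : lift F₁' = F₁ := lift_restrict _
  have hlift₂ : lift F₂' = F₂ := lift_restrict _
  have hliftsup : ∀ X Y : IntermediateField K ↥N, lift (X ⊔ Y) = lift X ⊔ lift Y := fun X Y =>
    IntermediateField.map_sup X Y (IntermediateField.val N)
  -- compositum is everything
  have hsup' : F₁' ⊔ F₂' = ⊤ := by
    apply lift_injective N
    rw [hliftsup, hlift₁, hlift₂, lift_top]
  have hdisj : H₁ ⊓ H₂ = ⊥ := by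
    have h := fixingSubgroup_sup' F₁' F₂'
    rw [hsup', IntermediateField.fixingSubgroup_top] at h
    exact h.symm
  -- the intersection
  set E' : IntermediateField K ↥N := F₁' ⊓ F₂' with hE'
  have hinf' : E' = restrict ((inf_le_left.trans le_sup_left : F₁ ⊓ F₂ ≤ N)) := by
    ext x
    simp only [hE', IntermediateField.mem_inf, hF₁', hF₂', mem_restrict,
      IntermediateField.mem_inf]
  have hliftE : lift E' = F₁ ⊓ F₂ := by rw [hinf', lift_restrict]
  -- finrank/card dictionary
  have hcard : ∀ H : Subgroup (↥N ≃ₐ[K] ↥N),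
      Module.finrank ↥(fixedField H) ↥N = Nat.card ↥H := by
    intro H
    rw [IntermediateField.finrank_fixedField_eq_card, Nat.card_eq_fintype_card]
  have hrank₁ : Module.finrank ↥F₁' ↥N = Nat.card ↥H₁ := by rw [← hfix₁]; exact hcard H₁
  have hrank₂ : Module.finrank ↥F₂' ↥N = Nat.card ↥H₂ := by rw [← hfix₂]; exact hcard H₂
  have hffsup : fixedField (H₁ ⊔ H₂) = E' := by rw [fixedField_sup', hfix₁, hfix₂]
  have hrankE : Module.finrank ↥E' ↥N = Nat.card ↥H₁ * Nat.card ↥H₂ := by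
    rw [← hffsup, hcard (H₁ ⊔ H₂), card_sup_of_disjoint H₁ H₂ hdisj]
  -- transfer the degree hypothesis to card of H₂ resp. H₁
  have hKE : Module.finrank K ↥(F₁ ⊓ F₂) = Module.finrank K ↥E' := by
    rw [← hliftE]; exact finrank_lift_eq N E'
  have hKF₁ : Module.finrank K ↥F₁ = Module.finrank K ↥F₁' := by
    rw [← hlift₁]; exact finrank_lift_eq N F₁'
  have hKF₂ : Module.finrank K ↥F₂ = Module.finrank K ↥F₂' := by
    rw [← hlift₂]; exact finrank_lift_eq N F₂'
  have tE : Module.finrank K ↥E' * Module.finrank ↥E' ↥N = Module.finrank K ↥N :=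
    Module.finrank_mul_finrank K ↥E' ↥N
  have tF₁ : Module.finrank K ↥F₁' * Module.finrank ↥F₁' ↥N = Module.finrank K ↥N :=
    Module.finrank_mul_finrank K ↥F₁' ↥N
  have tF₂ : Module.finrank K ↥F₂' * Module.finrank ↥F₂' ↥N = Module.finrank K ↥N :=
    Module.finrank_mul_finrank K ↥F₂' ↥N
  have tA₁ := tower_aux (inf_le_left : F₁ ⊓ F₂ ≤ F₁)
  have tA₂ := tower_aux (inf_le_right : F₁ ⊓ F₂ ≤ F₂)
  have hEpos : 0 < Module.finrank K ↥E' := Module.finrank_pos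
  have hH₁pos : 0 < Nat.card ↥H₁ := Nat.card_pos
  have hH₂pos : 0 < Nat.card ↥H₂ := Nat.card_pos
  have hd₁ : Module.finrank ↥(F₁ ⊓ F₂)
      ↥(IntermediateField.extendScalars (inf_le_left : F₁ ⊓ F₂ ≤ F₁)) = Nat.card ↥H₂ := by
    have l1 : Module.finrank K ↥E' * (Module.finrank ↥(F₁ ⊓ F₂)
        ↥(IntermediateField.extendScalars (inf_le_left : F₁ ⊓ F₂ ≤ F₁)) * Nat.card ↥H₁)
        = Module.finrank K ↥N := by
      rw [← mul_assoc, ← hKE, tA₁, hKF₁, ← hrank₁, tF₁]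
    have l2 : Module.finrank K ↥E' * (Nat.card ↥H₂ * Nat.card ↥H₁)
        = Module.finrank K ↥N := by
      rw [mul_comm (Nat.card ↥H₂), ← hrankE, tE]
    have h2 := Nat.eq_of_mul_eq_mul_left hEpos (l1.trans l2.symm)
    exact Nat.eq_of_mul_eq_mul_right hH₁pos h2
  have hd₂ : Module.finrank ↥(F₁ ⊓ F₂)
      ↥(IntermediateField.extendScalars (inf_le_right : F₁ ⊓ F₂ ≤ F₂)) = Nat.card ↥H₁ := by
    have l1 : Module.finrank K ↥E' * (Module.finrank ↥(F₁ ⊓ F₂)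
        ↥(IntermediateField.extendScalars (inf_le_right : F₁ ⊓ F₂ ≤ F₂)) * Nat.card ↥H₂)
        = Module.finrank K ↥N := by
      rw [← mul_assoc, ← hKE, tA₂, hKF₂, ← hrank₂, tF₂]
    have l2 : Module.finrank K ↥E' * (Nat.card ↥H₁ * Nat.card ↥H₂)
        = Module.finrank K ↥N := by
      rw [← hrankE, tE]
    have h2 := Nat.eq_of_mul_eq_mul_left hEpos (l1.trans l2.symm)
    exact Nat.eq_of_mul_eq_mul_right hH₂pos h2
  have hℓ₂ : ℓ ∣ Nat.card ↥H₂ := hd₁ ▸ hdvd.trans (Nat.gcd_dvd_left _ _)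
  have hℓ₁ : ℓ ∣ Nat.card ↥H₁ := hd₂ ▸ hdvd.trans (Nat.gcd_dvd_right _ _)
  -- Cauchy: elements of order ℓ in H₁ and H₂
  obtain ⟨g₁', hg₁'⟩ := exists_prime_orderOf_dvd_card (G := ↥H₁) ℓ
    (by rw [← Nat.card_eq_fintype_card]; exact hℓ₁)
  obtain ⟨g₂', hg₂'⟩ := exists_prime_orderOf_dvd_card (G := ↥H₂) ℓ
    (by rw [← Nat.card_eq_fintype_card]; exact hℓ₂)
  set g₁ : ↥N ≃ₐ[K] ↥N := (g₁' : ↥N ≃ₐ[K] ↥N) with hg₁def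
  set g₂ : ↥N ≃ₐ[K] ↥N := (g₂' : ↥N ≃ₐ[K] ↥N) with hg₂def
  have hg₁mem : g₁ ∈ H₁ := g₁'.2
  have hg₂mem : g₂ ∈ H₂ := g₂'.2
  have hord₁ : orderOf g₁ = ℓ :=
    (orderOf_injective H₁.subtype H₁.subtype_injective g₁').trans hg₁'
  have hord₂ : orderOf g₂ = ℓ :=
    (orderOf_injective H₂.subtype H₂.subtype_injective g₂').trans hg₂'
  have hc : Commute g₁ g₂ :=
    Subgroup.commute_of_normal_of_disjoint H₁ H₂ hn₁ hn₂ (disjoint_iff.mpr hdisj) g₁ g₂ hg₁mem hg₂mem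
  set g : ↥N ≃ₐ[K] ↥N := g₁ * g₂ with hgdef
  have p1 : g₁ ^ ℓ = 1 := by rw [← hord₁]; exact pow_orderOf_eq_one g₁
  have p2 : g₂ ^ ℓ = 1 := by rw [← hord₂]; exact pow_orderOf_eq_one g₂
  have hgpow : g ^ ℓ = 1 := by
    calc g ^ ℓ = g₁ ^ ℓ * g₂ ^ ℓ := hc.mul_pow ℓ
    _ = 1 := by rw [p1, p2, one_mul]
  have hgne : g ≠ 1 := by
    intro h
    have h1 : g₁ = g₂⁻¹ := by
      rw [hgdef] at h
      exact eq_inv_of_mul_eq_one_left h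
    have h2 : g₁ ∈ H₁ ⊓ H₂ := ⟨hg₁mem, h1 ▸ H₂.inv_mem hg₂mem⟩
    rw [hdisj, Subgroup.mem_bot] at h2
    rw [h2, orderOf_one] at hord₁
    exact hℓ.one_lt.ne' hord₁.symm
  have hordg : orderOf g = ℓ := orderOf_eq_prime hgpow hgne
  set S : Subgroup (↥N ≃ₐ[K] ↥N) := Subgroup.zpowers g with hS
  have hcardS : Nat.card ↥S = ℓ := by rw [hS, Nat.card_zpowers, hordg]
  have hpowone : ∀ k : ℤ, (ℓ : ℤ) ∣ k → g ^ k = 1 := by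
    intro k hk
    obtain ⟨m, rfl⟩ := hk
    rw [zpow_mul, zpow_natCast, ← hordg, pow_orderOf_eq_one, one_zpow]
  have hSH₁ : S ⊓ H₁ = ⊥ := by
    rw [eq_bot_iff]
    intro x hx
    rw [Subgroup.mem_inf] at hx
    obtain ⟨hxS, hxH⟩ := hx
    obtain ⟨k, rfl⟩ := Subgroup.mem_zpowers_iff.mp hxS
    have hzk : g ^ k = g₁ ^ k * g₂ ^ k := by rw [hgdef]; exact hc.mul_zpow k
    have hmem : g₂ ^ k ∈ H₁ ⊓ H₂ := by
      refine ⟨?_, H₂.zpow_mem hg₂mem k⟩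
      have hg2 : g₂ ^ k = (g₁ ^ k)⁻¹ * g ^ k := by
        rw [hzk, ← mul_assoc, inv_mul_cancel, one_mul]
      rw [hg2]
      exact H₁.mul_mem (H₁.inv_mem (H₁.zpow_mem hg₁mem k)) hxH
    rw [hdisj, Subgroup.mem_bot] at hmem
    rw [Subgroup.mem_bot]
    exact hpowone k (by rw [← hord₂]; exact orderOf_dvd_iff_zpow_eq_one.mpr hmem)
  have hSH₂ : S ⊓ H₂ = ⊥ := by
    rw [eq_bot_iff]
    intro x hx
    rw [Subgroup.mem_inf] at hx
    obtain ⟨hxS, hxH⟩ := hx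
    obtain ⟨k, rfl⟩ := Subgroup.mem_zpowers_iff.mp hxS
    have hzk : g ^ k = g₁ ^ k * g₂ ^ k := by rw [hgdef]; exact hc.mul_zpow k
    have hmem : g₁ ^ k ∈ H₁ ⊓ H₂ := by
      refine ⟨H₁.zpow_mem hg₁mem k, ?_⟩
      have hg1 : g₁ ^ k = g ^ k * (g₂ ^ k)⁻¹ := by
        rw [hzk, mul_assoc, mul_inv_cancel, mul_one]
      rw [hg1]
      exact H₂.mul_mem hxH (H₂.inv_mem (H₂.zpow_mem hg₂mem k))
    rw [hdisj, Subgroup.mem_bot] at hmem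
    rw [Subgroup.mem_bot]
    exact hpowone k (by rw [← hord₁]; exact orderOf_dvd_iff_zpow_eq_one.mpr hmem)
  set L' : IntermediateField K ↥N := fixedField S with hL'
  have hfixS : L'.fixingSubgroup = S := fixingSubgroup_fixedField S
  have htop : ∀ (X : IntermediateField K ↥N), X.fixingSubgroup = ⊥ → X = ⊤ := by
    intro X hX
    calc X = fixedField X.fixingSubgroup := (IsGalois.fixedField_fixingSubgroup X).symm
    _ = fixedField (⊤ : IntermediateField K ↥N).fixingSubgroup := by
        rw [hX, IntermediateField.fixingSubgroup_top]
    _ = ⊤ := IsGalois.fixedField_fixingSubgroup ⊤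
  have htop₁ : L' ⊔ F₁' = ⊤ := htop _ (by rw [fixingSubgroup_sup', hfixS]; exact hSH₁)
  have htop₂ : L' ⊔ F₂' = ⊤ := htop _ (by rw [fixingSubgroup_sup', hfixS]; exact hSH₂)
  have hrankL' : Module.finrank ↥L' ↥N = ℓ := (hcard S).trans hcardS
  have e₁ : lift L' ⊔ F₁ = N := by rw [← hlift₁, ← hliftsup, htop₁, lift_top]
  have e₂ : lift L' ⊔ F₂ = N := by rw [← hlift₂, ← hliftsup, htop₂, lift_top]
  refine ⟨lift L', lift_le L', by rw [e₁, e₂], ?_⟩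
  have tL := tower_aux (le_sup_left : lift L' ≤ lift L' ⊔ F₁)
  have hKsup : Module.finrank K ↥(lift L' ⊔ F₁) = Module.finrank K ↥N := by rw [e₁]
  have tN : Module.finrank K ↥L' * ℓ = Module.finrank K ↥N := by
    rw [← hrankL']; exact Module.finrank_mul_finrank K ↥L' ↥N
  have hKL : Module.finrank K ↥(lift L') = Module.finrank K ↥L' := finrank_lift_eq N L'
  have hLpos : 0 < Module.finrank K ↥L' := Module.finrank_pos
  rw [hKL, hKsup] at tL
  exact Nat.eq_of_mul_eq_mul_left hLpos (tL.trans tN.symm)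
end

section
/- For every prime q, the group GL₂(ℤ/2ℤ) × GL₂(ℤ/qℤ) contains a subgroup H isomorphic to the symmetric group S₃ such that H intersects GL₂(ℤ/2ℤ) × 1 trivially and H intersects 1 × GL₂(ℤ/qℤ) trivially. -/
open scoped MatrixGroups

namespace S3Aux

/-- Integer matrices for the standard 2-dim representation of S₃. -/
def val : Equiv.Perm (Fin 3) → Matrix (Fin 2) (Fin 2) ℤ := fun g =>
  if g = 1 then 1
  else if g = Equiv.swap 0 1 then !![-1, 1; 0, 1]
  else if g = Equiv.swap 1 2 then !![1, 0; 1, -1]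
  else if g = Equiv.swap 0 2 then !![0, -1; -1, 0]
  else if g = Equiv.swap 0 1 * Equiv.swap 1 2 then !![0, -1; 1, -1]
  else !![-1, 1; -1, 0]

lemma val_mul_inv : ∀ g, val g * val g⁻¹ = 1 := by decide
lemma val_inv_mul : ∀ g, val g⁻¹ * val g = 1 := by decide
lemma val_one : val 1 = 1 := by decide
lemma val_mul : ∀ g h, val (g * h) = val g * val h := by decide
lemma val_entry : ∀ g, g ≠ 1 →
    (val g 1 0 = 1 ∨ val g 1 0 = -1) ∨ (val g 0 1 = 1) := by decide

/-- The representation as a hom into `GL₂(ℤ)`. -/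
def ρ : Equiv.Perm (Fin 3) →* GL (Fin 2) ℤ where
  toFun g := ⟨val g, val g⁻¹, val_mul_inv g, val_inv_mul g⟩
  map_one' := by ext : 1; exact val_one
  map_mul' g h := by ext : 1; exact val_mul g h

/-- The representation over any commutative ring. -/
def φ (R : Type*) [CommRing R] : Equiv.Perm (Fin 3) →* GL (Fin 2) R :=
  (Matrix.GeneralLinearGroup.map (Int.castRingHom R)).comp ρ

lemma φ_injective (R : Type*) [CommRing R] [Nontrivial R] :
    Function.Injective (φ R) := by
  rw [injective_iff_map_eq_one]
  intro g hg
  by_contra hne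
  have h1 : ((φ R) g : Matrix (Fin 2) (Fin 2) R) = 1 := by
    rw [hg]; rfl
  have h10 := congrFun (congrFun h1 1) 0
  have h01 := congrFun (congrFun h1 0) 1
  have hmap : ((φ R) g : Matrix (Fin 2) (Fin 2) R) = (val g).map (Int.cast) := rfl
  rw [hmap] at h10 h01
  simp [Matrix.map_apply, Matrix.one_apply] at h10 h01
  rcases val_entry g hne with (h | h) | h
  · rw [h] at h10; simp at h10
  · rw [h] at h10; simp at h10
  · rw [h] at h01; simp at h01

end S3Aux

/-- Lemma (S3lemma): for every prime `q`, the group `GL₂(ℤ/2) × GL₂(ℤ/q)` contains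
a subgroup `H ≅ S₃` intersecting `GL₂(ℤ/2) × 1` and `1 × GL₂(ℤ/q)` trivially. -/
theorem stmt_8 (q : ℕ) (hq : q.Prime) :
    ∃ H : Subgroup (GL (Fin 2) (ZMod 2) × GL (Fin 2) (ZMod q)),
      Nonempty (↥H ≃* Equiv.Perm (Fin 3)) ∧
      H ⊓ Subgroup.prod ⊤ ⊥ = ⊥ ∧
      H ⊓ Subgroup.prod ⊥ ⊤ = ⊥ := by
  haveI : Fact q.Prime := ⟨hq⟩
  haveI : Fact (1 < q) := ⟨hq.one_lt⟩
  set Φ := (S3Aux.φ (ZMod 2)).prod (S3Aux.φ (ZMod q)) with hΦ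
  have hinj : Function.Injective Φ := fun a b hab => by
    exact S3Aux.φ_injective (ZMod 2) (congrArg Prod.fst hab)
  refine ⟨Φ.range, ⟨(MonoidHom.ofInjective hinj).symm⟩, ?_, ?_⟩
  · rw [eq_bot_iff]
    rintro x ⟨⟨g, rfl⟩, hx2⟩
    have hx2' : Φ g ∈ Subgroup.prod ⊤ ⊥ := hx2
    rw [Subgroup.mem_prod] at hx2'
    have : S3Aux.φ (ZMod q) g = 1 := hx2'.2
    have : g = 1 := S3Aux.φ_injective (ZMod q) (by simpa using this)
    simp [this, Subgroup.mem_bot]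
  · rw [eq_bot_iff]
    rintro x ⟨⟨g, rfl⟩, hx2⟩
    have hx2' : Φ g ∈ Subgroup.prod ⊥ ⊤ := hx2
    rw [Subgroup.mem_prod] at hx2'
    have : S3Aux.φ (ZMod 2) g = 1 := hx2'.1
    have : g = 1 := S3Aux.φ_injective (ZMod 2) (by simpa using this)
    simp [this, Subgroup.mem_bot]
end

section
/- Suppose F₁ and F₂ are extensions of K entangleable by L/K (i.e., LF₁ = LF₂ ⊋ L), and L'/K satisfies LL' ∩ F₁ = L ∩ F₁. Then (LL')F₁ = (LL')F₂ and [(LL')F₁ : LL'] = [LF₁ : L]. -/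
/-!
For `F/K` finite Galois, base change along any finite `M/K` gives `[MF : M] = [F : M ∩ F]`:
over `M ∩ F` the fields `F` and `M` meet trivially, so they are linearly disjoint since `F` is
Galois. Applied to `M = LL'` and `M = L`, the hypothesis `LL' ∩ F₁ = L ∩ F₁` makes the two
degrees equal, while `(LL')F₁ = L'(LF₁) = L'(LF₂) = (LL')F₂` is immediate.
-/

open Module IntermediateField

namespace IntermediateField

variable {K Ω : Type*} [Field K] [Field Ω] [Algebra K Ω] {B E : IntermediateField K Ω}

instance finiteDimensional_extendScalars (h : B ≤ E) [FiniteDimensional K E] :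
    FiniteDimensional B (extendScalars h) :=
  have : FiniteDimensional K (extendScalars h) :=
    (AlgEquiv.refl : E ≃ₐ[K] extendScalars h).toLinearEquiv.finiteDimensional
  .of_restrictScalars_finite K B _

instance isGalois_extendScalars (h : B ≤ E) [IsGalois K E] : IsGalois B (extendScalars h) :=
  have : IsGalois K (extendScalars h) := .of_algEquiv (AlgEquiv.refl : E ≃ₐ[K] extendScalars h)
  .tower_top_of_isGalois K B _

theorem relfinrank_sup_eq_relfinrank_of_isGalois (M F : IntermediateField K Ω)
    [FiniteDimensional K M] [FiniteDimensional K F] [IsGalois K F] :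
    M.relfinrank (M ⊔ F) = M.relfinrank F := by
  have hM : M ⊓ F ≤ M := inf_le_left
  have hF : M ⊓ F ≤ F := inf_le_right
  have hdisj : (extendScalars hF).LinearDisjoint (extendScalars hM) := by
    refine .of_inf_eq_bot (eq_bot_iff.2 fun x hx ↦ ?_)
    exact mem_bot.2 ⟨⟨x, hx.2, hx.1⟩, rfl⟩
  have hprod :
      (M ⊓ F).relfinrank (F ⊔ M) = (M ⊓ F).relfinrank F * (M ⊓ F).relfinrank M := by
    rw [relfinrank_eq_finrank_of_le hF, relfinrank_eq_finrank_of_le hM, ← hdisj.finrank_sup,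
      extendScalars_sup, relfinrank_eq_finrank_of_le]
  have hpos : 0 < (M ⊓ F).relfinrank M := by
    rw [relfinrank_eq_finrank_of_le hM]; exact finrank_pos
  rw [sup_comm, ← relfinrank_mul_relfinrank hM le_sup_left, inf_relfinrank_right,
    mul_comm] at hprod
  exact Nat.eq_of_mul_eq_mul_right hpos hprod

end IntermediateField

theorem stmt_12_general {K : Type*} [Field K]
    (L L' F₁ F₂ : IntermediateField K (AlgebraicClosure K))
    [FiniteDimensional K ↥L] [FiniteDimensional K ↥L']
    [FiniteDimensional K ↥F₁]
    [IsGalois K ↥F₁]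
    (hent : L ⊔ F₁ = L ⊔ F₂)
    (hL' : (L ⊔ L') ⊓ F₁ = L ⊓ F₁) :
    (L ⊔ L') ⊔ F₁ = (L ⊔ L') ⊔ F₂ ∧
      Module.finrank ↥(L ⊔ L')
          ↥(IntermediateField.extendScalars (le_sup_left : L ⊔ L' ≤ (L ⊔ L') ⊔ F₁)) =
        Module.finrank ↥L
          ↥(IntermediateField.extendScalars (le_sup_left : L ≤ L ⊔ F₁)) := by
  refine ⟨by rw [sup_right_comm, hent, sup_right_comm], ?_⟩
  rw [← relfinrank_eq_finrank_of_le, ← relfinrank_eq_finrank_of_le,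
    relfinrank_sup_eq_relfinrank_of_isGalois, relfinrank_sup_eq_relfinrank_of_isGalois,
    relfinrank_eq_of_inf_eq hL']

/-- Proposition (compent): if `F₁, F₂` are entangleable by `L` (`LF₁ = LF₂ ⊋ L`),
`F₁/K` is finite Galois, and `L'` satisfies `LL' ∩ F₁ = L ∩ F₁`, then `F₁, F₂`
are entangleable by `LL'` with `[(LL')F₁ : LL'] = [LF₁ : L]`. -/
theorem stmt_12 {K : Type*} [Field K]
    (L L' F₁ F₂ : IntermediateField K (AlgebraicClosure K))
    [FiniteDimensional K ↥L] [FiniteDimensional K ↥L']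
    [FiniteDimensional K ↥F₁] [FiniteDimensional K ↥F₂]
    [IsGalois K ↥F₁]
    (hent : L ⊔ F₁ = L ⊔ F₂) (hproper : L < L ⊔ F₁)
    (hL' : (L ⊔ L') ⊓ F₁ = L ⊓ F₁) :
    (L ⊔ L') ⊔ F₁ = (L ⊔ L') ⊔ F₂ ∧
      Module.finrank ↥(L ⊔ L')
          ↥(IntermediateField.extendScalars (le_sup_left : L ⊔ L' ≤ (L ⊔ L') ⊔ F₁)) =
        Module.finrank ↥L
          ↥(IntermediateField.extendScalars (le_sup_left : L ≤ L ⊔ F₁)) :=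
  stmt_12_general L L' F₁ F₂ hent hL'
end

section
/- Let K₁/K and K₂/K be finite Galois extensions with K₁ ∩ K₂ = K, and let L be an intermediate field of K₁K₂/K with L ∩ K₁ = K and L ∩ K₂ = K. Then [LK₁ ∩ LK₂ : L] = [L : K]. -/
/-!
Work in the finite Galois extension `E = K₁K₂` of `F`, with group `G`, and let `N₁, N₂, H` be
the fixing groups of `K₁, K₂, L`. Then `N₁, N₂` are normal, `G = N₁ × N₂`, and the disjointness
of `L` from `K₁, K₂` reads `H ⊔ N₁ = H ⊔ N₂ = ⊤`, so `[H : H ⊓ Nᵢ] = [G : Nᵢ]`. The field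
`LK₁ ∩ LK₂` is fixed by `(H ⊓ N₁) ⊔ (H ⊓ N₂)`, whose order is `|H ⊓ N₁| · |H ⊓ N₂|`, and index
counting gives `[H : (H ⊓ N₁) ⊔ (H ⊓ N₂)] · |H ⊓ N₂| = |N₂| = [G : H] · |H ⊓ N₂|`.
-/

open IntermediateField Module

namespace Subgroup

variable {G : Type*} [Group G]

theorem inf_relIndex_eq_index_of_sup_eq_top {H N : Subgroup G} [N.Normal] (h : H ⊔ N = ⊤) :
    (H ⊓ N).relIndex H = N.index := by
  rw [inf_relIndex_left, ← relIndex_sup_right, h, relIndex_top_right]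

theorem relIndex_eq_card_of_inf_eq_bot {H N : Subgroup G} (h : N ⊓ H = ⊥) :
    N.relIndex H = Nat.card H := by
  rw [← inf_relIndex_right, h, relIndex_bot_left]

theorem relIndex_inf_sup_inf_eq_index [Finite G] {H N₁ N₂ : Subgroup G} [N₁.Normal] [N₂.Normal]
    (hsup : N₁ ⊔ N₂ = ⊤) (hinf : N₁ ⊓ N₂ = ⊥) (h₁ : H ⊔ N₁ = ⊤) (h₂ : H ⊔ N₂ = ⊤) :
    ((H ⊓ N₁) ⊔ (H ⊓ N₂)).relIndex H = H.index := by
  set A := H ⊓ N₁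
  set B := H ⊓ N₂
  have hB_le : B ≤ N₂ := inf_le_right
  have hBN₁ : N₁ ⊓ B = ⊥ := eq_bot_mono (inf_le_inf_left N₁ hB_le) hinf
  have hN₁ : N₁.index = Nat.card N₂ := by
    rw [← inf_relIndex_eq_index_of_sup_eq_top (sup_comm N₁ N₂ ▸ hsup), inf_comm,
      hinf, relIndex_bot_left]
  have hAJ : (A ⊔ B) ⊓ N₁ = A :=
    le_antisymm (inf_le_inf_right N₁ (sup_le inf_le_left inf_le_left))
      (le_inf le_sup_left inf_le_right)
  have hJA : A.relIndex (A ⊔ B) = Nat.card B :=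
    calc A.relIndex (A ⊔ B) = ((A ⊔ B) ⊓ N₁).relIndex (A ⊔ B) := by rw [hAJ]
      _ = N₁.relIndex (A ⊔ B ⊔ N₁) := by rw [inf_relIndex_left, relIndex_sup_right]
      _ = N₁.relIndex (B ⊔ N₁) := by
        rw [sup_comm A, sup_assoc, sup_eq_right.mpr (inf_le_right : A ≤ N₁)]
      _ = Nat.card B := by rw [relIndex_sup_right, relIndex_eq_card_of_inf_eq_bot hBN₁]
  have hHJ : Nat.card B * (A ⊔ B).relIndex H = Nat.card N₂ := by
    rw [← hJA, relIndex_mul_relIndex _ _ _ le_sup_left (sup_le inf_le_left inf_le_left),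
      inf_relIndex_eq_index_of_sup_eq_top h₁, hN₁]
  have hH : Nat.card B * H.index = Nat.card N₂ := by
    have hB : B.relIndex N₂ * N₂.index = H.index * N₂.index := by
      rw [relIndex_mul_index hB_le, ← relIndex_mul_index (inf_le_left : B ≤ H),
        inf_relIndex_eq_index_of_sup_eq_top h₂, mul_comm]
    rw [← Nat.eq_of_mul_eq_mul_right (Nat.pos_of_ne_zero index_ne_zero_of_finite) hB,
      ← relIndex_bot_left, relIndex_mul_relIndex _ _ _ bot_le hB_le, relIndex_bot_left]
  exact Nat.eq_of_mul_eq_mul_left Nat.card_pos (hHJ.trans hH.symm)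

end Subgroup

namespace IntermediateField

section Galois

variable {F E : Type*} [Field F] [Field E] [Algebra F E] [FiniteDimensional F E] [IsGalois F E]

theorem fixingSubgroup_inf (A B : IntermediateField F E) :
    (A ⊓ B).fixingSubgroup = A.fixingSubgroup ⊔ B.fixingSubgroup :=
  IsGalois.intermediateFieldEquivSubgroup.map_inf A B

theorem relfinrank_eq_relIndex_fixingSubgroup {A B : IntermediateField F E} (h : A ≤ B) :
    relfinrank A B = B.fixingSubgroup.relIndex A.fixingSubgroup := by
  have hfin := relfinrank_mul_relfinrank (bot_le : ⊥ ≤ A) h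
  have hgrp := Subgroup.relIndex_mul_index (fixingSubgroup_antitone h)
  rw [relfinrank_bot_left, relfinrank_bot_left, finrank_eq_fixingSubgroup_index,
    finrank_eq_fixingSubgroup_index, ← hgrp, mul_comm] at hfin
  exact Nat.eq_of_mul_eq_mul_right (Nat.pos_of_ne_zero Subgroup.index_ne_zero_of_finite) hfin

theorem relfinrank_inf_sup_eq_finrank {K₁ K₂ L : IntermediateField F E}
    [IsGalois F K₁] [IsGalois F K₂] (hsup : K₁ ⊔ K₂ = ⊤) (hinf : K₁ ⊓ K₂ = ⊥)
    (h₁ : L ⊓ K₁ = ⊥) (h₂ : L ⊓ K₂ = ⊥) :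
    relfinrank L ((L ⊔ K₁) ⊓ (L ⊔ K₂)) = finrank F L := by
  have fixing_eq_top {A B : IntermediateField F E} (h : A ⊓ B = ⊥) :
      A.fixingSubgroup ⊔ B.fixingSubgroup = ⊤ := by
    rw [← fixingSubgroup_inf, h, fixingSubgroup_bot]
  rw [relfinrank_eq_relIndex_fixingSubgroup (le_inf le_sup_left le_sup_left),
    finrank_eq_fixingSubgroup_index, fixingSubgroup_inf, fixingSubgroup_sup, fixingSubgroup_sup]
  refine Subgroup.relIndex_inf_sup_inf_eq_index (fixing_eq_top hinf) ?_
    (fixing_eq_top h₁) (fixing_eq_top h₂)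
  rw [← fixingSubgroup_sup, hsup, fixingSubgroup_top]

end Galois

theorem relfinrank_lift {K L : Type*} [Field K] [Field L] [Algebra K L]
    {M : IntermediateField K L} (A B : IntermediateField K M) :
    relfinrank (lift A) (lift B) = relfinrank A B :=
  relfinrank_map_map _ _ _

end IntermediateField

/-- If `K₁/K`, `K₂/K` are finite Galois with `K₁ ∩ K₂ = K`, and `K ⊆ L ⊆ K₁K₂`
satisfies `L ∩ K₁ = K` and `L ∩ K₂ = K`, then `[LK₁ ∩ LK₂ : L] = [L : K]`. -/
theorem stmt_15 {K : Type*} [Field K]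
    (K₁ K₂ : IntermediateField K (AlgebraicClosure K))
    [FiniteDimensional K ↥K₁] [FiniteDimensional K ↥K₂]
    [IsGalois K ↥K₁] [IsGalois K ↥K₂]
    (hdisj : K₁ ⊓ K₂ = ⊥)
    (L : IntermediateField K (AlgebraicClosure K)) (hL : L ≤ K₁ ⊔ K₂)
    (h1 : L ⊓ K₁ = ⊥) (h2 : L ⊓ K₂ = ⊥) :
    Module.finrank ↥L
        ↥(IntermediateField.extendScalars
          (le_inf le_sup_left le_sup_left : L ≤ (L ⊔ K₁) ⊓ (L ⊔ K₂))) =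
      Module.finrank K ↥L := by
  have : IsGalois K ↥(K₁ ⊔ K₂) := {}
  generalize hM : K₁ ⊔ K₂ = M at hL this
  have : FiniteDimensional K M := hM ▸ finiteDimensional_sup K₁ K₂
  obtain ⟨L, rfl⟩ : ∃ L' : IntermediateField K M, lift L' = L := ⟨_, lift_restrict hL⟩
  set K₁' := restrict (hM ▸ le_sup_left : K₁ ≤ M)
  set K₂' := restrict (hM ▸ le_sup_right : K₂ ≤ M)
  have e₁ : lift K₁' = K₁ := lift_restrict _
  have e₂ : lift K₂' = K₂ := lift_restrict _
  have : IsGalois K K₁' := IsGalois.of_algEquiv (restrictAlgEquiv _)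
  have : IsGalois K K₂' := IsGalois.of_algEquiv (restrictAlgEquiv _)
  rw [← relfinrank_eq_finrank_of_le, ← e₁, ← e₂, ← lift_sup, ← lift_sup, ← lift_inf,
    relfinrank_lift, (liftAlgEquiv L).toLinearEquiv.finrank_eq.symm]
  refine relfinrank_inf_sup_eq_finrank (lift_injective M ?_) (lift_injective M ?_)
    (lift_injective M ?_) (lift_injective M ?_) <;>
  simp only [lift_sup, lift_inf, lift_top, lift_bot, e₁, e₂, hM, hdisj, h1, h2]
end
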